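/- Let D₀ = D₁ ×_e D₂ where D₁ and D₂ are open domains in ℂ(i₁). If (F, G) is an i₂e-generating pair on D₀, then (F, G) is in particular a j-generating pair on D₀, i.e. F and G are twice continuously differentiable on D₀ and Vec{F(ω)†₃G(ω)} ≠ 0 for all ω ∈ D₀. -/

import Mathlib

noncomputable section

open Complex Filter Topology

/-- The bicomplex numbers `𝕋 = {z₁ + z₂ i₂ : z₁, z₂ ∈ ℂ(i₁)}`, represented by the pair
of `ℂ(i₁)`-components `(z₁, z₂)`. -/
@[ext] structure Bicomplex : Type where
  z1 : ℂ
  z2 : ℂ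

namespace Bicomplex

instance : Zero Bicomplex := ⟨⟨0, 0⟩⟩
instance : One Bicomplex := ⟨⟨1, 0⟩⟩
instance : Add Bicomplex := ⟨fun w v => ⟨w.z1 + v.z1, w.z2 + v.z2⟩⟩
instance : Neg Bicomplex := ⟨fun w => ⟨-w.z1, -w.z2⟩⟩
instance : Mul Bicomplex := ⟨fun w v => ⟨w.z1 * v.z1 - w.z2 * v.z2, w.z1 * v.z2 + w.z2 * v.z1⟩⟩

@[simp] lemma zero_z1 : (0 : Bicomplex).z1 = 0 := rfl
@[simp] lemma zero_z2 : (0 : Bicomplex).z2 = 0 := rfl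
@[simp] lemma one_z1 : (1 : Bicomplex).z1 = 1 := rfl
@[simp] lemma one_z2 : (1 : Bicomplex).z2 = 0 := rfl
@[simp] lemma add_z1 (w v : Bicomplex) : (w + v).z1 = w.z1 + v.z1 := rfl
@[simp] lemma add_z2 (w v : Bicomplex) : (w + v).z2 = w.z2 + v.z2 := rfl
@[simp] lemma neg_z1 (w : Bicomplex) : (-w).z1 = -w.z1 := rfl
@[simp] lemma neg_z2 (w : Bicomplex) : (-w).z2 = -w.z2 := rfl
@[simp] lemma mul_z1 (w v : Bicomplex) : (w * v).z1 = w.z1 * v.z1 - w.z2 * v.z2 := rfl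
@[simp] lemma mul_z2 (w v : Bicomplex) : (w * v).z2 = w.z1 * v.z2 + w.z2 * v.z1 := rfl

/-- The bicomplex numbers form a commutative ring. -/
instance : CommRing Bicomplex where
  nsmul n w := ⟨n • w.z1, n • w.z2⟩
  zsmul n w := ⟨n • w.z1, n • w.z2⟩
  nsmul_zero a := by ext <;> exact zero_smul _ _
  nsmul_succ n a := by ext <;> exact succ_nsmul _ _
  zsmul_zero' a := by ext <;> exact zero_smul _ _
  zsmul_succ' n a := by ext <;> exact SubNegMonoid.zsmul_succ' _ _
  zsmul_neg' n a := by ext <;> exact SubNegMonoid.zsmul_neg' _ _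
  add_assoc a b c := by ext <;> simp <;> ring
  zero_add a := by ext <;> simp
  add_zero a := by ext <;> simp
  add_comm a b := by ext <;> simp <;> ring
  neg_add_cancel a := by ext <;> simp
  mul_assoc a b c := by ext <;> simp <;> ring
  one_mul a := by ext <;> simp
  mul_one a := by ext <;> simp
  left_distrib a b c := by ext <;> simp <;> ring
  right_distrib a b c := by ext <;> simp <;> ring
  zero_mul a := by ext <;> simp
  mul_zero a := by ext <;> simp
  mul_comm a b := by ext <;> simp <;> ring

/-- Inverse: `w⁻¹ = w†₂ / (z₁² + z₂²)` (junk value `0/0` on the null-cone). -/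
instance : Inv Bicomplex :=
  ⟨fun w => ⟨w.z1 / (w.z1 ^ 2 + w.z2 ^ 2), -w.z2 / (w.z1 ^ 2 + w.z2 ^ 2)⟩⟩

instance : Div Bicomplex := ⟨fun w v => w * v⁻¹⟩

/-- Embedding of `ℂ(i₁)` into `𝕋`. -/
def ofComplex (c : ℂ) : Bicomplex := ⟨c, 0⟩

/-- Embedding of `ℝ` into `𝕋`. -/
def ofReal (t : ℝ) : Bicomplex := ⟨(t : ℂ), 0⟩

/-- The imaginary unit `i₁`. -/
def i1 : Bicomplex := ⟨Complex.I, 0⟩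

/-- The imaginary unit `i₂`. -/
def i2 : Bicomplex := ⟨0, 1⟩

/-- The hyperbolic unit `j = i₁ i₂`. -/
def jj : Bicomplex := ⟨0, Complex.I⟩

/-- The idempotent `e₁ = (1 + j)/2`. -/
def e1 : Bicomplex := ⟨1 / 2, Complex.I / 2⟩

/-- The idempotent `e₂ = (1 - j)/2`. -/
def e2 : Bicomplex := ⟨1 / 2, -(Complex.I) / 2⟩

/-- The projection `P₁(z₁ + z₂ i₂) = z₁ - z₂ i₁`. -/
def P1 (w : Bicomplex) : ℂ := w.z1 - w.z2 * Complex.I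

/-- The projection `P₂(z₁ + z₂ i₂) = z₁ + z₂ i₁`. -/
def P2 (w : Bicomplex) : ℂ := w.z1 + w.z2 * Complex.I

/-- The conjugation `w†₁ = z̄₁ + z̄₂ i₂`. -/
def dag1 (w : Bicomplex) : Bicomplex := ⟨(starRingEnd ℂ) w.z1, (starRingEnd ℂ) w.z2⟩

/-- The conjugation `w†₂ = z₁ - z₂ i₂`. -/
def dag2 (w : Bicomplex) : Bicomplex := ⟨w.z1, -w.z2⟩

/-- The conjugation `w†₃ = z̄₁ - z̄₂ i₂`. -/
def dag3 (w : Bicomplex) : Bicomplex := ⟨(starRingEnd ℂ) w.z1, -((starRingEnd ℂ) w.z2)⟩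

/-- `𝕋` as `ℂ × ℂ`. -/
def toProd (w : Bicomplex) : ℂ × ℂ := (w.z1, w.z2)

/-- `ℂ × ℂ` as `𝕋`. -/
def ofProd (p : ℂ × ℂ) : Bicomplex := ⟨p.1, p.2⟩

instance : TopologicalSpace Bicomplex := TopologicalSpace.induced toProd inferInstance

/-- The set of points `w` such that `w - w₀` is invertible (i.e. not a zero divisor). -/
def invertibleDiff (w₀ : Bicomplex) : Set Bicomplex :=
  {w | (w - w₀).z1 ^ 2 + (w - w₀).z2 ^ 2 ≠ 0}

/-- `f` is `𝕋`-differentiable at `w₀` with derivative `d`: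
`(f w - f w₀)/(w - w₀) → d` as `w → w₀` with `w - w₀` invertible. -/
def HasTDerivAt (f : Bicomplex → Bicomplex) (d w₀ : Bicomplex) : Prop :=
  Tendsto (fun w => (f w - f w₀) / (w - w₀)) (𝓝[invertibleDiff w₀] w₀) (𝓝 d)

/-- `f` is `𝕋`-holomorphic on `U` if it is `𝕋`-differentiable at each point of `U`. -/
def THolomorphicOn (f : Bicomplex → Bicomplex) (U : Set Bicomplex) : Prop :=
  ∀ w ∈ U, ∃ d, HasTDerivAt f d w

/-- `f` viewed as a map `ℂ² → ℂ²`. -/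
def fProd (f : Bicomplex → Bicomplex) : ℂ × ℂ → ℂ × ℂ := fun p => toProd (f (ofProd p))

/-- `f : 𝕋 → 𝕋` is `n` times continuously (real-)differentiable on `U`. -/
def TContDiffOn (n : ℕ∞) (f : Bicomplex → Bicomplex) (U : Set Bicomplex) : Prop :=
  ContDiffOn ℝ n (fProd f) (toProd '' U)

/-- `g : 𝕋 → ℂ` is `n` times continuously (real-)differentiable on `U`. -/
def CContDiffOn (n : ℕ∞) (g : Bicomplex → ℂ) (U : Set Bicomplex) : Prop :=
  ContDiffOn ℝ n (fun p => g (ofProd p)) (toProd '' U)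

/-- Real partial derivative of `g : 𝕋 → ℂ` at `w` in direction `e`. -/
def pd (e : Bicomplex) (g : Bicomplex → ℂ) (w : Bicomplex) : ℂ :=
  deriv (fun t : ℝ => g (w + ofReal t * e)) 0

/-- Existence of the real partial derivative of `g : 𝕋 → ℂ` at `w` in direction `e`. -/
def pdExists (e : Bicomplex) (g : Bicomplex → ℂ) (w : Bicomplex) : Prop :=
  DifferentiableAt ℝ (fun t : ℝ => g (w + ofReal t * e)) 0

/-- The scalar (`ℂ(i₁)`-) component `f₁` of `f = f₁ + f₂ i₂`. -/
def s1 (f : Bicomplex → Bicomplex) : Bicomplex → ℂ := fun w => (f w).z1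

/-- The vectorial (`ℂ(i₁)`-) component `f₂` of `f = f₁ + f₂ i₂`. -/
def s2 (f : Bicomplex → Bicomplex) : Bicomplex → ℂ := fun w => (f w).z2

/-- Real partial derivative of `f : 𝕋 → 𝕋` in direction `e`. -/
def pdT (e : Bicomplex) (f : Bicomplex → Bicomplex) : Bicomplex → Bicomplex :=
  fun w => ⟨pd e (s1 f) w, pd e (s2 f) w⟩

/-- Existence of the real partial derivative of `f : 𝕋 → 𝕋` in direction `e`. -/
def pdTExists (e : Bicomplex) (f : Bicomplex → Bicomplex) (w : Bicomplex) : Prop :=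
  pdExists e (s1 f) w ∧ pdExists e (s2 f) w

/-- `∂_{z₁} g = ½(∂ₓ g - i₁ ∂_y g)` for `g : 𝕋 → ℂ`. -/
def dz1 (g : Bicomplex → ℂ) : Bicomplex → ℂ :=
  fun w => (pd 1 g w - Complex.I * pd i1 g w) / 2

/-- `∂_{z̄₁} g = ½(∂ₓ g + i₁ ∂_y g)` for `g : 𝕋 → ℂ`. -/
def dz1bar (g : Bicomplex → ℂ) : Bicomplex → ℂ :=
  fun w => (pd 1 g w + Complex.I * pd i1 g w) / 2

/-- `∂_{z₂} g = ½(∂_p g - i₁ ∂_q g)` for `g : 𝕋 → ℂ`. -/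
def dz2 (g : Bicomplex → ℂ) : Bicomplex → ℂ :=
  fun w => (pd i2 g w - Complex.I * pd jj g w) / 2

/-- `∂_{z̄₂} g = ½(∂_p g + i₁ ∂_q g)` for `g : 𝕋 → ℂ`. -/
def dz2bar (g : Bicomplex → ℂ) : Bicomplex → ℂ :=
  fun w => (pd i2 g w + Complex.I * pd jj g w) / 2

/-- `∂_{z₁}` applied componentwise to `f : 𝕋 → 𝕋`. -/
def dZ1 (f : Bicomplex → Bicomplex) : Bicomplex → Bicomplex :=
  fun w => ⟨dz1 (s1 f) w, dz1 (s2 f) w⟩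

/-- `∂_{z₂}` applied componentwise to `f : 𝕋 → 𝕋`. -/
def dZ2 (f : Bicomplex → Bicomplex) : Bicomplex → Bicomplex :=
  fun w => ⟨dz2 (s1 f) w, dz2 (s2 f) w⟩

/-- `∂_{z̄₁}` applied componentwise to `f : 𝕋 → 𝕋`. -/
def dZ1bar (f : Bicomplex → Bicomplex) : Bicomplex → Bicomplex :=
  fun w => ⟨dz1bar (s1 f) w, dz1bar (s2 f) w⟩

/-- `∂_{z̄₂}` applied componentwise to `f : 𝕋 → 𝕋`. -/
def dZ2bar (f : Bicomplex → Bicomplex) : Bicomplex → Bicomplex :=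
  fun w => ⟨dz2bar (s1 f) w, dz2bar (s2 f) w⟩

/-- `∂_ω = ½(∂_{z₁} - i₂ ∂_{z₂})`. -/
def dOm (f : Bicomplex → Bicomplex) : Bicomplex → Bicomplex :=
  fun w => ofComplex (1 / 2) * (dZ1 f w - i2 * dZ2 f w)

/-- `∂_{ω†₂} = ∂_ω̄ = ½(∂_{z₁} + i₂ ∂_{z₂})`. -/
def dOmBar (f : Bicomplex → Bicomplex) : Bicomplex → Bicomplex :=
  fun w => ofComplex (1 / 2) * (dZ1 f w + i2 * dZ2 f w)

/-- `∂_{ω†₁} = ½(∂_{z̄₁} - i₂ ∂_{z̄₂})`. -/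
def dOmDag1 (f : Bicomplex → Bicomplex) : Bicomplex → Bicomplex :=
  fun w => ofComplex (1 / 2) * (dZ1bar f w - i2 * dZ2bar f w)

/-- `∂_{ω†₃} = ½(∂_{z̄₁} + i₂ ∂_{z̄₂})`. -/
def dOmDag3 (f : Bicomplex → Bicomplex) : Bicomplex → Bicomplex :=
  fun w => ofComplex (1 / 2) * (dZ1bar f w + i2 * dZ2bar f w)

/-- The complexified Laplacian `Δ_ℂ = ∂²_{z₁} + ∂²_{z₂}` acting on `ℂ(i₁)`-valued functions. -/
def lapC (g : Bicomplex → ℂ) : Bicomplex → ℂ :=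
  fun w => dz1 (dz1 g) w + dz2 (dz2 g) w

/-- The vector part in the `i₂`-representation `w = ζ₁ + ζ₂ i₁` with `ζ₁, ζ₂ ∈ ℂ(i₂)`:
for `w = x₁ + x₂i₁ + x₃i₂ + x₄j`, `Vec(w) = x₂ + x₄ i₂`, encoded as the complex number
`x₂ + x₄ i`. -/
def vec2 (w : Bicomplex) : ℂ := ⟨w.z1.im, w.z2.im⟩

/-- Embedding of `ℂ(i₂)` into `𝕋`: the complex number `a + b i` represents `a + b i₂`. -/
def ofC2 (c : ℂ) : Bicomplex := ⟨(c.re : ℂ), (c.im : ℂ)⟩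

/-- Multiplication of hyperbolic numbers `ℂ(j) = {x + yj}`, encoded as pairs in `ℝ × ℝ`. -/
def hmul (a b : ℝ × ℝ) : ℝ × ℝ := (a.1 * b.1 + a.2 * b.2, a.1 * b.2 + a.2 * b.1)

/-- Division of hyperbolic numbers (junk value when the denominator is a zero divisor). -/
def hdiv (a b : ℝ × ℝ) : ℝ × ℝ :=
  hmul a (b.1 / (b.1 ^ 2 - b.2 ^ 2), -b.2 / (b.1 ^ 2 - b.2 ^ 2))

/-- Embedding of the hyperbolic numbers `ℂ(j)` into `𝕋`: `(x, y) ↦ x + y j`. -/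
def ofHyp (a : ℝ × ℝ) : Bicomplex := ⟨(a.1 : ℂ), (a.2 : ℂ) * Complex.I⟩

/-- The vector part in the `j`-representation `w = ζ₁ + ζ₂ i₁` with `ζ₁, ζ₂ ∈ ℂ(j)`:
for `w = x₁ + x₂i₁ + x₃i₂ + x₄j`, `Vec(w) = x₂ - x₃ j`, encoded as the pair `(x₂, -x₃)`. -/
def vec3 (w : Bicomplex) : ℝ × ℝ := (w.z1.im, -w.z2.re)

/-- The `𝕋`-cartesian set `X₁ ×ₑ X₂ = {w : P₁ w ∈ X₁ ∧ P₂ w ∈ X₂}`. -/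
def eProd (X₁ X₂ : Set ℂ) : Set Bicomplex := {w | P1 w ∈ X₁ ∧ P2 w ∈ X₂}

/-- `(F, G)` is an `i₁`-generating pair on `D`. -/
def GenPair1 (F G : Bicomplex → Bicomplex) (D : Set Bicomplex) : Prop :=
  TContDiffOn 2 F D ∧ TContDiffOn 2 G D ∧ ∀ w ∈ D, (dag2 (F w) * G w).z2 ≠ 0

/-- `(F, G)` is an `i₂`-generating pair on `D`. -/
def GenPair2 (F G : Bicomplex → Bicomplex) (D : Set Bicomplex) : Prop :=
  TContDiffOn 2 F D ∧ TContDiffOn 2 G D ∧ ∀ w ∈ D, vec2 (dag1 (F w) * G w) ≠ 0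

/-- `(F, G)` is a `j`-generating pair on `D`. -/
def GenPairJ (F G : Bicomplex → Bicomplex) (D : Set Bicomplex) : Prop :=
  TContDiffOn 2 F D ∧ TContDiffOn 2 G D ∧ ∀ w ∈ D, vec3 (dag3 (F w) * G w) ≠ 0

/-- The unique `λ₀ ∈ ℂ(i₁)` with `w(ω₀) = λ₀ F(ω₀) + μ₀ G(ω₀)`. -/
def lam1 (F G wf : Bicomplex → Bicomplex) (ω₀ : Bicomplex) : ℂ :=
  (dag2 (wf ω₀) * G ω₀).z2 / (dag2 (F ω₀) * G ω₀).z2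

/-- The unique `μ₀ ∈ ℂ(i₁)` with `w(ω₀) = λ₀ F(ω₀) + μ₀ G(ω₀)`. -/
def mu1 (F G wf : Bicomplex → Bicomplex) (ω₀ : Bicomplex) : ℂ :=
  -((dag2 (wf ω₀) * F ω₀).z2 / (dag2 (F ω₀) * G ω₀).z2)

/-- `w` has `(F,G)_{i₁}`-derivative `d` at `ω₀`. -/
def HasFGDeriv1 (F G wf : Bicomplex → Bicomplex) (d ω₀ : Bicomplex) : Prop :=
  Tendsto
    (fun ω => (wf ω - ofComplex (lam1 F G wf ω₀) * F ω - ofComplex (mu1 F G wf ω₀) * G ω)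
        / (ω - ω₀))
    (𝓝[invertibleDiff ω₀] ω₀) (𝓝 d)

/-- The unique `λ₀ ∈ ℂ(j)` with `w(ω₀) = λ₀ F(ω₀) + μ₀ G(ω₀)`. -/
def lamJ (F G wf : Bicomplex → Bicomplex) (ω₀ : Bicomplex) : ℝ × ℝ :=
  hdiv (vec3 (dag3 (wf ω₀) * G ω₀)) (vec3 (dag3 (F ω₀) * G ω₀))

/-- The unique `μ₀ ∈ ℂ(j)` with `w(ω₀) = λ₀ F(ω₀) + μ₀ G(ω₀)`. -/
def muJ (F G wf : Bicomplex → Bicomplex) (ω₀ : Bicomplex) : ℝ × ℝ :=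
  -(hdiv (vec3 (dag3 (wf ω₀) * F ω₀)) (vec3 (dag3 (F ω₀) * G ω₀)))

/-- `w` has `(F,G)_j`-derivative `d` at `ω₀`. -/
def HasFGDerivJ (F G wf : Bicomplex → Bicomplex) (d ω₀ : Bicomplex) : Prop :=
  Tendsto
    (fun ω => (wf ω - ofHyp (lamJ F G wf ω₀) * F ω - ofHyp (muJ F G wf ω₀) * G ω) / (ω - ω₀))
    (𝓝[invertibleDiff ω₀] ω₀) (𝓝 d)

/-- `w` is `(F,G)_j`-pseudoanalytic on `D`. -/
def PseudoanalyticJ (F G wf : Bicomplex → Bicomplex) (D : Set Bicomplex) : Prop :=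
  ∀ ω ∈ D, ∃ d, HasFGDerivJ F G wf d ω

/-- `w` has continuous partial derivatives in a neighborhood of `ω₀`. -/
def HasContPartialsNear (f : Bicomplex → Bicomplex) (w₀ : Bicomplex) : Prop :=
  ∃ V ∈ 𝓝 w₀, ∀ e ∈ ({1, i1, i2, jj} : Set Bicomplex),
    (∀ w ∈ V, pdTExists e f w) ∧ ContinuousOn (pdT e f) V

/-! Characteristic coefficients with respect to the `†₂` conjugation (`i₁` case). -/

def denom2 (F G : Bicomplex → Bicomplex) (w : Bicomplex) : Bicomplex :=
  F w * dag2 (G w) - dag2 (F w) * G w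

def aCoef2₁ (F G : Bicomplex → Bicomplex) (w : Bicomplex) : Bicomplex :=
  -((dag1 (F w) * dOmDag1 G w - dOmDag1 F w * dag1 (G w)) / denom2 F G w)

def bCoef2₁ (F G : Bicomplex → Bicomplex) (w : Bicomplex) : Bicomplex :=
  (F w * dOmDag1 G w - dOmDag1 F w * G w) / denom2 F G w

def aCoef2₂ (F G : Bicomplex → Bicomplex) (w : Bicomplex) : Bicomplex :=
  -((dag2 (F w) * dOmBar G w - dOmBar F w * dag2 (G w)) / denom2 F G w)

def bCoef2₂ (F G : Bicomplex → Bicomplex) (w : Bicomplex) : Bicomplex :=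
  (F w * dOmBar G w - dOmBar F w * G w) / denom2 F G w

def aCoef2₃ (F G : Bicomplex → Bicomplex) (w : Bicomplex) : Bicomplex :=
  -((dag3 (F w) * dOmDag3 G w - dOmDag3 F w * dag3 (G w)) / denom2 F G w)

def bCoef2₃ (F G : Bicomplex → Bicomplex) (w : Bicomplex) : Bicomplex :=
  (F w * dOmDag3 G w - dOmDag3 F w * G w) / denom2 F G w

def Acoef2 (F G : Bicomplex → Bicomplex) (w : Bicomplex) : Bicomplex :=
  -((dag2 (F w) * dOm G w - dOm F w * dag2 (G w)) / denom2 F G w)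

def Bcoef2 (F G : Bicomplex → Bicomplex) (w : Bicomplex) : Bicomplex :=
  (F w * dOm G w - dOm F w * G w) / denom2 F G w

/-! Characteristic coefficients with respect to the `†₃` conjugation (`j` case). -/

def denom3 (F G : Bicomplex → Bicomplex) (w : Bicomplex) : Bicomplex :=
  F w * dag3 (G w) - dag3 (F w) * G w

def aCoef3₁ (F G : Bicomplex → Bicomplex) (w : Bicomplex) : Bicomplex :=
  -((dag1 (F w) * dOmDag1 G w - dOmDag1 F w * dag1 (G w)) / denom3 F G w)

def bCoef3₁ (F G : Bicomplex → Bicomplex) (w : Bicomplex) : Bicomplex :=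
  (F w * dOmDag1 G w - dOmDag1 F w * G w) / denom3 F G w

def aCoef3₂ (F G : Bicomplex → Bicomplex) (w : Bicomplex) : Bicomplex :=
  -((dag2 (F w) * dOmBar G w - dOmBar F w * dag2 (G w)) / denom3 F G w)

def bCoef3₂ (F G : Bicomplex → Bicomplex) (w : Bicomplex) : Bicomplex :=
  (F w * dOmBar G w - dOmBar F w * G w) / denom3 F G w

def aCoef3₃ (F G : Bicomplex → Bicomplex) (w : Bicomplex) : Bicomplex :=
  -((dag3 (F w) * dOmDag3 G w - dOmDag3 F w * dag3 (G w)) / denom3 F G w)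

def bCoef3₃ (F G : Bicomplex → Bicomplex) (w : Bicomplex) : Bicomplex :=
  (F w * dOmDag3 G w - dOmDag3 F w * G w) / denom3 F G w

def Acoef3 (F G : Bicomplex → Bicomplex) (w : Bicomplex) : Bicomplex :=
  -((dag3 (F w) * dOm G w - dOm F w * dag3 (G w)) / denom3 F G w)

def Bcoef3 (F G : Bicomplex → Bicomplex) (w : Bicomplex) : Bicomplex :=
  (F w * dOm G w - dOm F w * G w) / denom3 F G w

/-! Classical (Bers) pseudoanalytic function theory in `ℂ(i₁)`. -/

/-- A complex (in `i₁`) generating pair on `D ⊆ ℂ(i₁)`. -/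
def ComplexGenPair (Fe Ge : ℂ → ℂ) (D : Set ℂ) : Prop :=
  ContDiffOn ℝ 2 Fe D ∧ ContDiffOn ℝ 2 Ge D ∧
    ∀ z ∈ D, ((starRingEnd ℂ) (Fe z) * Ge z).im ≠ 0

/-- The unique real `λ₀` with `w(z₀) = λ₀ F(z₀) + μ₀ G(z₀)`. -/
def lamBers (Fe Ge we : ℂ → ℂ) (z₀ : ℂ) : ℝ :=
  ((starRingEnd ℂ) (we z₀) * Ge z₀).im / ((starRingEnd ℂ) (Fe z₀) * Ge z₀).im

/-- The unique real `μ₀` with `w(z₀) = λ₀ F(z₀) + μ₀ G(z₀)`. -/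
def muBers (Fe Ge we : ℂ → ℂ) (z₀ : ℂ) : ℝ :=
  -(((starRingEnd ℂ) (we z₀) * Fe z₀).im / ((starRingEnd ℂ) (Fe z₀) * Ge z₀).im)

/-- `w_e` has Bers `(F_e,G_e)`-derivative `d` at `z₀`. -/
def HasBersDerivAt (Fe Ge we : ℂ → ℂ) (d z₀ : ℂ) : Prop :=
  Tendsto
    (fun z => (we z - (lamBers Fe Ge we z₀ : ℂ) * Fe z - (muBers Fe Ge we z₀ : ℂ) * Ge z)
        / (z - z₀))
    (𝓝[≠] z₀) (𝓝 d)

/-- `w_e` is `(F_e,G_e)`-pseudoanalytic (in the sense of Bers) on `D`. -/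
def BersPseudoanalyticOn (Fe Ge we : ℂ → ℂ) (D : Set ℂ) : Prop :=
  ∀ z ∈ D, ∃ d, HasBersDerivAt Fe Ge we d z

/-- `∂_z̄ = ½(∂ₓ + i ∂_y)` for functions `ℂ(i₁) → ℂ(i₁)`. -/
def dzbarC (g : ℂ → ℂ) (z : ℂ) : ℂ :=
  (deriv (fun t : ℝ => g (z + t)) 0 + Complex.I * deriv (fun t : ℝ => g (z + t * Complex.I)) 0) / 2

/-- The Bers characteristic coefficient `a_{(F_e,G_e)}`. -/
def aBers (Fe Ge : ℂ → ℂ) (z : ℂ) : ℂ :=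
  -(((starRingEnd ℂ) (Fe z) * dzbarC Ge z - dzbarC Fe z * (starRingEnd ℂ) (Ge z)) /
    (Fe z * (starRingEnd ℂ) (Ge z) - (starRingEnd ℂ) (Fe z) * Ge z))

/-- The Bers characteristic coefficient `b_{(F_e,G_e)}`. -/
def bBers (Fe Ge : ℂ → ℂ) (z : ℂ) : ℂ :=
  (Fe z * dzbarC Ge z - dzbarC Fe z * Ge z) /
    (Fe z * (starRingEnd ℂ) (Ge z) - (starRingEnd ℂ) (Fe z) * Ge z)

/-- `(F, G)` is the `i₂e`-generating pair associated to complex generating pairs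
`(F_{e1}, G_{e1})` on `D₁` and `(F_{e2}, G_{e2})` on `D₂`. -/
def I2eGenPair (Fe1 Ge1 Fe2 Ge2 : ℂ → ℂ) (D₁ D₂ : Set ℂ)
    (F G : Bicomplex → Bicomplex) : Prop :=
  ComplexGenPair Fe1 Ge1 D₁ ∧ ComplexGenPair Fe2 Ge2 D₂ ∧
  (∀ w, F w = ofComplex (Fe1 (P1 w)) * e1 + ofComplex (Fe2 (P2 w)) * e2) ∧
  (∀ w, G w = ofComplex (Ge1 (P1 w)) * e1 + ofComplex (Ge2 (P2 w)) * e2)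

end Bicomplex

open Bicomplex

/-! `P1` is the `e₁`-component of the idempotent decomposition: a ring homomorphism `𝕋 → ℂ(i₁)`
turning `†₃` into complex conjugation. Its imaginary part is the sum of the two coordinates of
`Vec`, so `Im (P1 (F†₃ G)) = Im (conj F_{e1} · G_{e1}) ≠ 0` already forces `Vec (F†₃ G) ≠ 0`.
In real coordinates `F = ((F_{e1} ∘ P1 + F_{e2} ∘ P2) / 2, i (F_{e1} ∘ P1 - F_{e2} ∘ P2) / 2)`
with `P1`, `P2` real-linear, which gives the smoothness. -/

namespace Bicomplex

lemma P1_mul (u v : Bicomplex) : P1 (u * v) = P1 u * P1 v := by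
  simp only [P1, mul_z1, mul_z2]
  linear_combination (-(u.z2 * v.z2)) * I_sq

lemma P1_dag3 (w : Bicomplex) : P1 (dag3 w) = (starRingEnd ℂ) (P1 w) := by
  simp only [P1, dag3, map_sub, map_mul, conj_I]
  ring

lemma P1_ofComplex_mul_e1_add (a b : ℂ) : P1 (ofComplex a * e1 + ofComplex b * e2) = a := by
  simp only [P1, ofComplex, e1, e2, add_z1, add_z2, mul_z1, mul_z2]
  linear_combination ((b - a) / 2) * I_sq

lemma im_P1 (w : Bicomplex) : (P1 w).im = (vec3 w).1 + (vec3 w).2 := by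
  simp [P1, vec3, sub_eq_add_neg]

lemma vec3_ne_zero_of_im_P1_ne_zero {w : Bicomplex} (h : (P1 w).im ≠ 0) : vec3 w ≠ 0 := by
  intro hw
  rw [im_P1, hw] at h
  simp at h

lemma toProd_image_eProd (X₁ X₂ : Set ℂ) :
    toProd '' eProd X₁ X₂ = {p : ℂ × ℂ | p.1 - p.2 * I ∈ X₁ ∧ p.1 + p.2 * I ∈ X₂} := by
  ext p
  constructor
  · rintro ⟨w, hw, rfl⟩
    exact hw
  · intro hp
    exact ⟨⟨p.1, p.2⟩, hp, rfl⟩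

lemma fProd_of_idempotent_decomp {H : Bicomplex → Bicomplex} {H₁ H₂ : ℂ → ℂ}
    (hH : ∀ w, H w = ofComplex (H₁ (P1 w)) * e1 + ofComplex (H₂ (P2 w)) * e2) :
    fProd H = fun p : ℂ × ℂ =>
      ((H₁ (p.1 - p.2 * I) + H₂ (p.1 + p.2 * I)) / 2,
        (H₁ (p.1 - p.2 * I) - H₂ (p.1 + p.2 * I)) * I / 2) := by
  funext p
  simp only [fProd, hH, toProd, ofProd, ofComplex, e1, e2, P1, P2, add_z1, add_z2,
    mul_z1, mul_z2, Prod.mk.injEq]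
  constructor <;> ring

lemma tContDiffOn_eProd_of_idempotent_decomp {n : ℕ∞} {X₁ X₂ : Set ℂ}
    {H : Bicomplex → Bicomplex} {H₁ H₂ : ℂ → ℂ}
    (h₁ : ContDiffOn ℝ n H₁ X₁) (h₂ : ContDiffOn ℝ n H₂ X₂)
    (hH : ∀ w, H w = ofComplex (H₁ (P1 w)) * e1 + ofComplex (H₂ (P2 w)) * e2) :
    TContDiffOn n H (eProd X₁ X₂) := by
  rw [TContDiffOn, toProd_image_eProd, fProd_of_idempotent_decomp hH]
  have hP1 : ContDiff ℝ n fun p : ℂ × ℂ => p.1 - p.2 * I :=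
    contDiff_fst.sub (contDiff_snd.mul contDiff_const)
  have hP2 : ContDiff ℝ n fun p : ℂ × ℂ => p.1 + p.2 * I :=
    contDiff_fst.add (contDiff_snd.mul contDiff_const)
  set S := {p : ℂ × ℂ | p.1 - p.2 * I ∈ X₁ ∧ p.1 + p.2 * I ∈ X₂}
  have c₁ := h₁.comp (s := S) hP1.contDiffOn fun _ hp => hp.1
  have c₂ := h₂.comp (s := S) hP2.contDiffOn fun _ hp => hp.2
  exact ((c₁.add c₂).div_const 2).prodMk (((c₁.sub c₂).mul contDiffOn_const).div_const 2)

end Bicomplex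

theorem i2eGenPair_is_genPairJ_general (D₁ D₂ : Set ℂ)
    (Fe1 Ge1 Fe2 Ge2 : ℂ → ℂ) (F G : Bicomplex → Bicomplex)
    (hFG : I2eGenPair Fe1 Ge1 Fe2 Ge2 D₁ D₂ F G) :
    GenPairJ F G (eProd D₁ D₂) := by
  obtain ⟨⟨hF1, hG1, hne1⟩, ⟨hF2, hG2, -⟩, hF, hG⟩ := hFG
  refine ⟨tContDiffOn_eProd_of_idempotent_decomp hF1 hF2 hF,
    tContDiffOn_eProd_of_idempotent_decomp hG1 hG2 hG, fun w hw => ?_⟩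
  apply vec3_ne_zero_of_im_P1_ne_zero
  rw [hF, hG, P1_mul, P1_dag3, P1_ofComplex_mul_e1_add, P1_ofComplex_mul_e1_add]
  exact hne1 (P1 w) hw.1

/-- An `i₂e`-generating pair on `D₀ = D₁ ×ₑ D₂` is in particular a
`j`-generating pair on `D₀`: `F` and `G` are twice continuously differentiable on `D₀` and
`Vec{F(ω)†₃G(ω)} ≠ 0` for all `ω ∈ D₀`. -/
theorem i2eGenPair_is_genPairJ (D₁ D₂ : Set ℂ)
    (hD₁ : IsOpen D₁) (hD₂ : IsOpen D₂) (hcD₁ : IsConnected D₁) (hcD₂ : IsConnected D₂)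
    (Fe1 Ge1 Fe2 Ge2 : ℂ → ℂ) (F G : Bicomplex → Bicomplex)
    (hFG : I2eGenPair Fe1 Ge1 Fe2 Ge2 D₁ D₂ F G) :
    GenPairJ F G (eProd D₁ D₂) :=
  i2eGenPair_is_genPairJ_general D₁ D₂ Fe1 Ge1 Fe2 Ge2 F G hFG
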